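/- If G is a finitely generated group with arbitrarily large finite quotients, then for every positive integer n there exists a finite generating set A of G such that the dead-end depth of G with respect to A is at least n. -/

import Mathlib

/-- Word length of `g` with respect to generating set `S` (using `S ∪ S⁻¹`). -/
noncomputable def wl {G : Type*} [Group G] (S : Set G) (g : G) : ℕ :=
  sInf {n | ∃ l : List G, (∀ x ∈ l, x ∈ S ∨ x⁻¹ ∈ S) ∧ l.length = n ∧ l.prod = g}

/-- Word metric with respect to `S`. -/
noncomputable def wdist {G : Type*} [Group G] (S : Set G) (g h : G) : ℕ := wl S (g⁻¹ * h)

/-- Dead-end depth of `g` with respect to `A`: distance to the nearest element strictly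
farther from the identity, `⊤` if none exists. -/
noncomputable def depth {G : Type*} [Group G] (A : Set G) (g : G) : ℕ∞ :=
  sInf ((fun g' => (wdist A g g' : ℕ∞)) '' {g' | wl A g < wl A g'})

/-- Partial product `u 0 * u 1 * ⋯ * u (i-1)`. -/
def pprod {M : Type*} [Monoid M] (u : ℕ → M) (i : ℕ) : M := ((List.range i).map u).prod

/-!
Fix a finite generating set `S` of `G` and a finite quotient `π : G → Q` so large that some
element of `Q` has length `> n` with respect to `P = π S`; let `L > n` be the largest `P`-length,
attained at `z₀`. Fix a section `h : Q → G` with `h 1 = 1` whose values have `S`-length `≤ D`,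
and let `A` consist of the elements of `S`-length `≤ E + 2D` whose image has `P`-length `≤ 1`,
for `E` large. Cutting an `S`-word of `g` into `m` blocks of length `≤ E` and correcting each
block by values of `h` shows `|g|_A ≤ m` whenever `|g|_S ≤ m E` and `|π g|_P ≤ m`; conversely
`|π g|_P ≤ |g|_A`. So `g₀ = h z₀` has `A`-length `L`, which is the largest `A`-length on the
`S`-ball of radius `L E`, and for `E ≥ (2n + 1) D + 1` every element within `A`-distance `n` of
`g₀` still lies in that ball. Thus `g₀` has depth at least `n`.
-/

open Pointwise

section WordLength

variable {G : Type*} [Group G] {S : Set G}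

lemma wl_le_length {l : List G} (hl : ∀ x ∈ l, x ∈ S ∨ x⁻¹ ∈ S) : wl S l.prod ≤ l.length :=
  Nat.sInf_le ⟨l, hl, rfl, rfl⟩

lemma wl_one : wl S (1 : G) = 0 :=
  Nat.le_zero.mp (wl_le_length (l := []) (by simp))

lemma wl_le_one_of_mem {x : G} (hx : x ∈ S) : wl S x ≤ 1 := by
  simpa using wl_le_length (S := S) (l := [x]) (by simp [hx])

lemma exists_word_length_eq_wl (hS : Subgroup.closure S = ⊤) (g : G) :
    ∃ l : List G, (∀ x ∈ l, x ∈ S ∨ x⁻¹ ∈ S) ∧ l.length = wl S g ∧ l.prod = g := by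
  have hg : g ∈ Submonoid.closure (S ∪ S⁻¹) := by
    rw [← Subgroup.closure_toSubmonoid, hS]; trivial
  obtain ⟨l, hl, rfl⟩ := Submonoid.exists_list_of_mem_closure hg
  exact Nat.sInf_mem (s := {n | ∃ w : List G, (∀ x ∈ w, x ∈ S ∨ x⁻¹ ∈ S) ∧ w.length = n ∧
    w.prod = l.prod}) ⟨l.length, l, fun x hx => (hl x hx).imp id Set.mem_inv.mp, rfl, rfl⟩

lemma wl_eq_zero_iff (hS : Subgroup.closure S = ⊤) {g : G} : wl S g = 0 ↔ g = 1 := by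
  refine ⟨fun h => ?_, fun h => h ▸ wl_one⟩
  obtain ⟨l, -, hlen, rfl⟩ := exists_word_length_eq_wl hS g
  simp [List.length_eq_zero_iff.mp (hlen.trans h)]

lemma wl_inv_le (hS : Subgroup.closure S = ⊤) (g : G) : wl S g⁻¹ ≤ wl S g := by
  obtain ⟨l, hl, hlen, rfl⟩ := exists_word_length_eq_wl hS g
  rw [List.prod_inv_reverse, ← hlen]
  refine (wl_le_length fun x hx => ?_).trans (by simp)
  obtain ⟨y, hy, rfl⟩ := List.mem_map.mp (List.mem_reverse.mp hx)
  simpa [or_comm] using hl y hy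

lemma wl_inv (hS : Subgroup.closure S = ⊤) (g : G) : wl S g⁻¹ = wl S g :=
  le_antisymm (wl_inv_le hS g) (by simpa using wl_inv_le hS g⁻¹)

lemma wl_mul_le (hS : Subgroup.closure S = ⊤) (g h : G) : wl S (g * h) ≤ wl S g + wl S h := by
  obtain ⟨l₁, hl₁, hlen₁, rfl⟩ := exists_word_length_eq_wl hS g
  obtain ⟨l₂, hl₂, hlen₂, rfl⟩ := exists_word_length_eq_wl hS h
  rw [← List.prod_append, ← hlen₁, ← hlen₂, ← List.length_append]
  exact wl_le_length fun x hx => (List.mem_append.mp hx).elim (hl₁ x) (hl₂ x)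

lemma exists_mul_eq_of_wl_le_add (hS : Subgroup.closure S = ⊤) {g : G} {a b : ℕ}
    (hg : wl S g ≤ a + b) : ∃ c d, c * d = g ∧ wl S c ≤ a ∧ wl S d ≤ b := by
  obtain ⟨l, hl, hlen, rfl⟩ := exists_word_length_eq_wl hS g
  refine ⟨(l.take a).prod, (l.drop a).prod, by rw [← List.prod_append, List.take_append_drop],
    ?_, ?_⟩
  · exact (wl_le_length fun x hx => hl x (List.mem_of_mem_take hx)).trans (by simp)
  · exact (wl_le_length fun x hx => hl x (List.mem_of_mem_drop hx)).trans (by simp; omega)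

lemma wl_list_prod_le (hS : Subgroup.closure S = ⊤) {k : ℕ} :
    ∀ {l : List G}, (∀ x ∈ l, wl S x ≤ k) → wl S l.prod ≤ k * l.length
  | [], _ => by simp [wl_one]
  | x :: l, h => by
    rw [List.prod_cons, List.length_cons, mul_add_one, add_comm]
    exact (wl_mul_le hS _ _).trans <|
      add_le_add (h x List.mem_cons_self) (wl_list_prod_le hS fun y hy => h y (by simp [hy]))

lemma wl_map_le {H : Type*} [Group H] {A : Set G} {B : Set H} (hA : Subgroup.closure A = ⊤)
    (hB : Subgroup.closure B = ⊤) (f : G →* H) {k : ℕ} (hf : ∀ a ∈ A, wl B (f a) ≤ k) (g : G) :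
    wl B (f g) ≤ k * wl A g := by
  obtain ⟨l, hl, hlen, rfl⟩ := exists_word_length_eq_wl hA g
  rw [← hlen, map_list_prod, ← List.length_map f]
  refine wl_list_prod_le hB fun y hy => ?_
  obtain ⟨x, hx, rfl⟩ := List.mem_map.mp hy
  rcases hl x hx with h | h
  · exact hf x h
  · simpa [wl_inv hB] using hf _ h

end WordLength

section WordBall

variable {G : Type*} [Group G] {S : Set G}

def wordBall (S : Set G) (n : ℕ) : Set G := {g | wl S g ≤ n}

lemma wordBall_add_subset (hS : Subgroup.closure S = ⊤) (a b : ℕ) :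
    wordBall S (a + b) ⊆ wordBall S a * wordBall S b := by
  intro g hg
  obtain ⟨c, d, rfl, hc, hd⟩ := exists_mul_eq_of_wl_le_add hS hg
  exact Set.mul_mem_mul hc hd

lemma wordBall_subset_pow (hS : Subgroup.closure S = ⊤) : ∀ n, wordBall S n ⊆ wordBall S 1 ^ n
  | 0 => fun g hg => by simpa [wordBall, wl_eq_zero_iff hS] using hg
  | n + 1 => (wordBall_add_subset hS n 1).trans <| by
      rw [pow_succ]; exact Set.mul_subset_mul_right (wordBall_subset_pow hS n)

lemma wordBall_one_subset (hS : Subgroup.closure S = ⊤) : wordBall S 1 ⊆ insert 1 (S ∪ S⁻¹) := by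
  intro g hg
  obtain ⟨l, hl, hlen, rfl⟩ := exists_word_length_eq_wl hS g
  rcases l with _ | ⟨x, _ | ⟨y, l⟩⟩
  · simp
  · simpa using Or.inr (hl x List.mem_cons_self)
  · change wl S _ ≤ 1 at hg
    simp only [← hlen, List.length_cons] at hg
    omega

lemma exists_finset_wordBall_subset_pow [DecidableEq G] (hS : Subgroup.closure S = ⊤) (hSfin : S.Finite)
    (n : ℕ) : ∃ u : Finset G, u.card ≤ 2 * S.ncard + 1 ∧ wordBall S n ⊆ ↑(u ^ n) := by
  have hU : (insert 1 (S ∪ S⁻¹)).Finite := (hSfin.union hSfin.inv).insert 1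
  refine ⟨hU.toFinset, ?_, ?_⟩
  · rw [← Set.ncard_eq_toFinset_card _ hU]
    calc (insert 1 (S ∪ S⁻¹)).ncard ≤ (S ∪ S⁻¹).ncard + 1 := Set.ncard_insert_le _ _
      _ ≤ S.ncard + S⁻¹.ncard + 1 := by gcongr; exact Set.ncard_union_le _ _
      _ = 2 * S.ncard + 1 := by rw [Set.ncard_inv]; ring
  · rw [Finset.coe_pow, Set.Finite.coe_toFinset]
    exact (wordBall_subset_pow hS n).trans (Set.pow_subset_pow_left (wordBall_one_subset hS))

lemma finite_wordBall (hS : Subgroup.closure S = ⊤) (hSfin : S.Finite) (n : ℕ) :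
    (wordBall S n).Finite := by
  classical
  obtain ⟨u, -, hu⟩ := exists_finset_wordBall_subset_pow hS hSfin n
  exact (u ^ n).finite_toSet.subset hu

lemma natCard_wordBall_le (hS : Subgroup.closure S = ⊤) (hSfin : S.Finite) (n : ℕ) :
    Nat.card (wordBall S n) ≤ (2 * S.ncard + 1) ^ n := by
  classical
  obtain ⟨u, hu, hsub⟩ := exists_finset_wordBall_subset_pow hS hSfin n
  calc Nat.card (wordBall S n) ≤ Nat.card (↑(u ^ n) : Set G) :=
        Nat.card_mono (u ^ n).finite_toSet hsub
    _ = (u ^ n).card := Nat.card_coe_set_eq _ |>.trans (Set.ncard_coe_finset _)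
    _ ≤ u.card ^ n := Finset.card_pow_le
    _ ≤ (2 * S.ncard + 1) ^ n := Nat.pow_le_pow_left hu n

lemma exists_lt_wl_of_pow_lt_card [Finite G] (hS : Subgroup.closure S = ⊤) {n : ℕ}
    (hcard : (2 * S.ncard + 1) ^ n < Nat.card G) : ∃ g, n < wl S g := by
  by_contra! hball
  have hle := natCard_wordBall_le hS S.toFinite n
  rw [Set.eq_univ_of_forall (s := wordBall S n) hball, Nat.card_univ] at hle
  omega

end WordBall

section Lifting

variable {G Q : Type*} [Group G] [Group Q] {S A : Set G} {P : Set Q}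

lemma wl_le_of_wl_le_mul_of_wl_map_le (π : G →* Q) (hS : Subgroup.closure S = ⊤)
    (hP : Subgroup.closure P = ⊤) (hA : Subgroup.closure A = ⊤) {h : Q → G}
    (hπh : ∀ z, π (h z) = z) (h₁ : h 1 = 1) {D E : ℕ} (hD : ∀ z, wl S (h z) ≤ D)
    (hAS : π ⁻¹' wordBall P 1 ∩ wordBall S (E + 2 * D) ⊆ A) {m : ℕ} {g : G}
    (hg : wl S g ≤ m * E) (hgπ : wl P (π g) ≤ m) : wl A g ≤ m := by
  -- `c * h ((π c)⁻¹ * q)` is `c`, moved by a short element into the fibre over `q`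
  suffices key : ∀ m c q, wl S c ≤ m * E → wl P q ≤ m → wl A (c * h ((π c)⁻¹ * q)) ≤ m by
    simpa [h₁] using key m g (π g) hg hgπ
  intro m
  induction m with
  | zero =>
    intro c q hc hq
    obtain rfl := (wl_eq_zero_iff hS).mp (by simpa using hc)
    obtain rfl := (wl_eq_zero_iff hP).mp (by simpa using hq)
    simp [h₁, wl_one]
  | succ m ih =>
    intro c q hc hq
    obtain ⟨c', w, rfl, hc', hw⟩ := exists_mul_eq_of_wl_le_add hS (hc.trans_eq (add_one_mul m E))
    obtain ⟨q', p, rfl, hq', hp⟩ := exists_mul_eq_of_wl_le_add hP hq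
    set u' := (π c')⁻¹ * q'
    set u := (π (c' * w))⁻¹ * (q' * p)
    set x' := c' * h u'
    set x := c' * w * h u
    have hstep : x'⁻¹ * x ∈ A := by
      refine hAS ⟨?_, ?_⟩
      · have hπ : π (x'⁻¹ * x) = p := by simp only [x, x', u, u', map_mul, map_inv, hπh]; group
        rwa [Set.mem_preimage, hπ]
      · have hx : x'⁻¹ * x = (h u')⁻¹ * w * h u := by simp only [x, x']; group
        have hx₁ := wl_mul_le hS ((h u')⁻¹ * w) (h u)
        have hx₂ := wl_mul_le hS (h u')⁻¹ w
        rw [wl_inv hS] at hx₂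
        change wl S _ ≤ _
        rw [hx]
        linarith [hD u', hD u]
    calc wl A x = wl A (x' * (x'⁻¹ * x)) := by rw [mul_inv_cancel_left]
      _ ≤ wl A x' + wl A (x'⁻¹ * x) := wl_mul_le hA _ _
      _ ≤ m + 1 := add_le_add (ih c' q' hc' hq') (wl_le_one_of_mem hstep)

end Lifting

lemma le_depth_of_forall_le_wdist {G : Type*} [Group G] {A : Set G} {g : G} {n : ℕ}
    (h : ∀ g', wl A g < wl A g' → n ≤ wdist A g g') : (n : ℕ∞) ≤ depth A g :=
  le_sInf <| by rintro _ ⟨g', hg', rfl⟩; exact Nat.cast_le.mpr (h g' hg')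

lemma closure_image_eq_top_of_surjective {G Q : Type*} [Group G] [Group Q] {S : Set G}
    (hS : Subgroup.closure S = ⊤) {π : G →* Q} (hπ : Function.Surjective π) :
    Subgroup.closure (π '' S) = ⊤ := by
  rw [← MonoidHom.map_closure, hS, Subgroup.map_top_of_surjective π hπ]

theorem exists_le_depth_of_surjective {G Q : Type*} [Group G] [Group Q] [Finite Q] {S : Set G}
    (hS : Subgroup.closure S = ⊤) (hSfin : S.Finite) {π : G →* Q} (hπ : Function.Surjective π)
    {n : ℕ} (hdeep : ∃ z, n < wl (π '' S) z) :
    ∃ A : Set G, A.Finite ∧ Subgroup.closure A = ⊤ ∧ ∃ g, (n : ℕ∞) ≤ depth A g := by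
  classical
  set P := π '' S
  have hP : Subgroup.closure P = ⊤ := closure_image_eq_top_of_surjective hS hπ
  set h : Q → G := Function.update (Function.surjInv hπ) 1 1
  have hπh : ∀ z, π (h z) = z := fun z => by
    by_cases hz : z = 1 <;> simp [h, hz, Function.surjInv_eq hπ]
  obtain ⟨D, hD⟩ : ∃ D, ∀ z, wl S (h z) ≤ D :=
    ⟨_, (Finite.exists_max fun z => wl S (h z)).choose_spec⟩
  obtain ⟨z₀, hz₀⟩ := Finite.exists_max (wl P)
  set L := wl P z₀
  have hnL : n < L := hdeep.elim fun z hz => hz.trans_le (hz₀ z)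
  set E := (2 * n + 1) * D + 1
  have hLE : D + (E + 2 * D) * n < L * E := calc
    D + (E + 2 * D) * n < (n + 1) * E := by simp only [E]; ring_nf; omega
    _ ≤ L * E := Nat.mul_le_mul_right E hnL
  set A := π ⁻¹' wordBall P 1 ∩ wordBall S (E + 2 * D)
  have hSA : S ⊆ A := fun s hs =>
    ⟨wl_le_one_of_mem ⟨s, hs, rfl⟩, (wl_le_one_of_mem hs).trans (by omega)⟩
  have hA : Subgroup.closure A = ⊤ := top_unique (hS ▸ Subgroup.closure_mono hSA)
  have hupper : ∀ g, wl S g ≤ L * E → wl A g ≤ L := fun g hg =>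
    wl_le_of_wl_le_mul_of_wl_map_le π hS hP hA hπh (by simp [h]) hD subset_rfl hg (hz₀ _)
  have hgL : wl A (h z₀) = L := by
    refine le_antisymm (hupper _ ((hD z₀).trans (by omega))) ?_
    simpa [hπh] using wl_map_le hA hP π (fun a ha => ha.1) (h z₀)
  refine ⟨A, (finite_wordBall hS hSfin _).subset Set.inter_subset_right, hA, h z₀,
    le_depth_of_forall_le_wdist fun g hg => ?_⟩
  by_contra! hclose
  have hgS : wl S g ≤ L * E := calc
    wl S g = wl S (h z₀ * ((h z₀)⁻¹ * g)) := by rw [mul_inv_cancel_left]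
    _ ≤ wl S (h z₀) + wl S ((h z₀)⁻¹ * g) := wl_mul_le hS _ _
    _ ≤ D + (E + 2 * D) * n := add_le_add (hD z₀) <|
        (wl_map_le hA hS (MonoidHom.id G) (fun a ha => ha.2) _).trans
          (Nat.mul_le_mul_left _ hclose.le)
    _ ≤ L * E := hLE.le
  exact absurd (hupper g hgS) (by omega)

/-- If `G` is finitely generated with arbitrarily large finite quotients, then for every
positive integer `n` there is a finite generating set `A` of `G` with respect to which the
dead-end depth of `G` is at least `n`. -/
theorem stmt13 {G : Type*} [Group G] [Group.FG G]
    (hquot : ∀ m : ℕ, ∃ (Q : Type) (_ : Group Q) (_ : Finite Q) (π : G →* Q),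
      Function.Surjective π ∧ m ≤ Nat.card Q) :
    ∀ n : ℕ, 0 < n → ∃ A : Set G, A.Finite ∧ Subgroup.closure A = ⊤ ∧
      (n : ℕ∞) ≤ ⨆ g : G, depth A g := by
  intro n _
  obtain ⟨S, hS, hSfin⟩ := Group.fg_iff.mp ‹Group.FG G›
  obtain ⟨Q, _, _, π, hπ, hQ⟩ := hquot ((2 * S.ncard + 1) ^ n + 1)
  have hcard : (2 * (π '' S).ncard + 1) ^ n < Nat.card Q :=
    lt_of_le_of_lt (Nat.pow_le_pow_left (by gcongr; exact Set.ncard_image_le hSfin) n) hQ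
  obtain ⟨A, hAfin, hA, g, hg⟩ := exists_le_depth_of_surjective hS hSfin hπ
    (exists_lt_wl_of_pow_lt_card (closure_image_eq_top_of_surjective hS hπ) hcard)
  exact ⟨A, hAfin, hA, hg.trans (le_iSup (depth A) g)⟩
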